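/- Let a ∈ ℝ \ 2πℤ and α = min{|a − 2πn| : n ∈ ℤ}. Let γ be locally absolutely continuous on (0,∞) with γ(t) mod 2π 1-periodic (i.e. γ(t+1) − γ(t) ∈ 2πℤ for all t), and let Γ ∈ L²_loc(0,∞) be 1-periodic. Suppose θ : (0,∞) → ℝ is locally absolutely continuous and satisfies |θ′(t) − a − γ′(t)| ≤ t^{−2/3} for a.e. t ∈ (0,∞). Then for any x ≥ x₀ > r(α) := s(α,2/3,1) + 4·r(α,2/3,1)·(α^{−4/3} + 3)^{1/2}, one has |∫_{x₀}^x Γ(t)·sin θ(t)/t dt| ≤ ‖Γ‖₂·r(α)/x₀^{2/3}, where ‖Γ‖₂ = (∫₀¹ Γ(t)² dt)^{1/2}. -/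

import Mathlib

/-!
Write `f(t) = Γ(t) e^{iθ(t)} / t`, so that the integral is `Im ∫_{x₀}^x f`. Over one period the
phase `θ` advances by `a` modulo `2π` up to an error `O(t^{-2/3})`, hence
`f(t + 1) = e^{ia} f(t) + O(|Γ(t)| t^{-5/3})`. Comparing `∫_{x₀}^x f` with its translate by one
period gives `(e^{ia} - 1) ∫_{x₀}^x f` as two integrals of `f` over unit intervals plus
`O(‖Γ‖₂ x₀^{-2/3})`; by periodicity and Cauchy–Schwarz every unit-interval integral of `|Γ|` is at
most `‖Γ‖₂`. Finally `|e^{ia} - 1| = 2 |sin (α / 2)| ≥ 2α / π` by Jordan's inequality, and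
`r(α) ≥ 10⁴ / α` absorbs the constants.
-/

open MeasureTheory Real Set

noncomputable section

/-- `s(α,β,C) = (100·C·α^{β-1} + 10⁴)^{1/β}·α⁻¹`. -/
def sConst (α β C : ℝ) : ℝ := (100 * C * α ^ (β - 1) + 10 ^ 4) ^ (1 / β) / α

/-- `r(α,β,C) = 30·C·β⁻¹·α^{β-1} + 10π`. -/
def rConst (α β C : ℝ) : ℝ := 30 * C / β * α ^ (β - 1) + 10 * π

/-- `r(α) = s(α,2/3,1) + 4·r(α,2/3,1)·(α^{-4/3} + 3)^{1/2}`. -/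
def rA (α : ℝ) : ℝ :=
  sConst α (2 / 3) 1 + 4 * rConst α (2 / 3) 1 * Real.sqrt (α ^ (-(4 : ℝ) / 3) + 3)

theorem intervalIntegrable_abs_of_sq {Γ : ℝ → ℝ} {c d : ℝ} (hm : AEStronglyMeasurable Γ)
    (h : IntervalIntegrable (fun t => Γ t ^ 2) volume c d) :
    IntervalIntegrable (fun t => |Γ t|) volume c d := by
  refine (h.add (intervalIntegrable_const (c := (1 : ℝ)))).mono_fun'
    (continuous_abs.comp_aestronglyMeasurable hm).restrict
    (Filter.Eventually.of_forall fun t => ?_)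
  simp only [Real.norm_eq_abs, abs_abs]
  nlinarith [sq_abs (Γ t), sq_nonneg (|Γ t| - 1)]

theorem integral_abs_le_sqrt_integral_sq {Γ : ℝ → ℝ} (c : ℝ) (hm : AEStronglyMeasurable Γ)
    (h : IntervalIntegrable (fun t => Γ t ^ 2) volume c (c + 1)) :
    ∫ t in c..c + 1, |Γ t| ≤ √(∫ t in c..c + 1, Γ t ^ 2) := by
  have hc : c ≤ c + 1 := by linarith
  rw [intervalIntegral.integral_of_le hc, intervalIntegral.integral_of_le hc]
  have hΓ : MemLp Γ 2 (volume.restrict (Ioc c (c + 1))) :=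
    (memLp_two_iff_integrable_sq hm.restrict).2 h.1
  have holder := integral_mul_le_Lp_mul_Lq_of_nonneg (μ := volume.restrict (Ioc c (c + 1)))
    Real.HolderConjugate.two_two (f := fun t => |Γ t|) (g := fun _ => (1 : ℝ))
    (Filter.Eventually.of_forall fun t => abs_nonneg _)
    (Filter.Eventually.of_forall fun _ => zero_le_one)
    (by simpa using hΓ.norm) (by simpa using memLp_const (1 : ℝ))
  simp only [mul_one, integral_const, Real.rpow_two, sq_abs] at holder
  simpa [Real.sqrt_eq_rpow] using holder

theorem Function.Periodic.intervalIntegrable_abs {Γ : ℝ → ℝ} (hper : Function.Periodic Γ 1)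
    (hm : AEStronglyMeasurable Γ) (hL2 : IntervalIntegrable (fun t => Γ t ^ 2) volume 0 1)
    (c d : ℝ) : IntervalIntegrable (fun t => |Γ t|) volume c d :=
  intervalIntegrable_abs_of_sq hm ((hper.comp (· ^ 2)).intervalIntegrable₀ one_ne_zero hL2 c d)

theorem Function.Periodic.integral_abs_le_sqrt_integral_sq {Γ : ℝ → ℝ}
    (hper : Function.Periodic Γ 1) (hm : AEStronglyMeasurable Γ)
    (hL2 : IntervalIntegrable (fun t => Γ t ^ 2) volume 0 1) (c : ℝ) :
    ∫ t in c..c + 1, |Γ t| ≤ √(∫ t in (0 : ℝ)..1, Γ t ^ 2) := by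
  have hsq : Function.Periodic (fun t => Γ t ^ 2) 1 := hper.comp (· ^ 2)
  have hshift : ∫ t in c..c + 1, Γ t ^ 2 = ∫ t in (0 : ℝ)..1, Γ t ^ 2 := by
    simpa using hsq.intervalIntegral_add_eq c 0
  rw [← hshift]
  exact _root_.integral_abs_le_sqrt_integral_sq c hm (hsq.intervalIntegrable₀ one_ne_zero hL2 _ _)

theorem IntervalIntegrable.mul_rpow {g : ℝ → ℝ} {s t : ℝ} (hg : IntervalIntegrable g volume s t)
    (hs : 0 < s) (ht : 0 < t) (r : ℝ) :
    IntervalIntegrable (fun u => g u * u ^ r) volume s t :=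
  hg.mul_continuousOn fun u hu => (Real.continuousAt_rpow_const u r
    (Or.inl (lt_of_lt_of_le (lt_min hs ht) hu.1).ne')).continuousWithinAt

theorem rpow_neg_five_thirds_le_sub {d : ℝ} (hd : 0 < d) :
    (d + 1) ^ (-(5 : ℝ) / 3) ≤ 3 / 2 * (d ^ (-(2 : ℝ) / 3) - (d + 1) ^ (-(2 : ℝ) / 3)) := by
  have h0 : (0 : ℝ) ∉ uIcc d (d + 1) := by
    rw [uIcc_of_le (by linarith)]
    exact fun h => absurd h.1 (by linarith)
  have hint : ∫ t in d..d + 1, t ^ (-(5 : ℝ) / 3) =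
      3 / 2 * (d ^ (-(2 : ℝ) / 3) - (d + 1) ^ (-(2 : ℝ) / 3)) := by
    rw [integral_rpow (Or.inr ⟨by norm_num, h0⟩)]
    ring_nf
  rw [← hint]
  simpa using intervalIntegral.integral_mono_on (μ := volume) (by linarith) intervalIntegrable_const
    (intervalIntegral.intervalIntegrable_rpow (Or.inr h0)) fun t ht =>
      Real.rpow_le_rpow_of_nonpos (by linarith [ht.1]) ht.2 (by norm_num : -(5 : ℝ) / 3 ≤ 0)

theorem sum_rpow_neg_five_thirds_le {c : ℝ} (hc : 1 ≤ c) (n : ℕ) :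
    ∑ k ∈ Finset.range n, (c + k) ^ (-(5 : ℝ) / 3) ≤ 5 / 2 * c ^ (-(2 : ℝ) / 3) := by
  have hc0 : 0 < c := by linarith
  cases n with
  | zero => simpa using Real.rpow_nonneg hc0.le _
  | succ n =>
    have htel : ∑ k ∈ Finset.range n, (c + ↑(k + 1)) ^ (-(5 : ℝ) / 3) ≤
        3 / 2 * (c ^ (-(2 : ℝ) / 3) - (c + n) ^ (-(2 : ℝ) / 3)) := by
      have := Finset.sum_range_sub' (fun k : ℕ => (c + k) ^ (-(2 : ℝ) / 3)) n
      simp only [Nat.cast_zero, add_zero] at this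
      rw [← this, Finset.mul_sum]
      refine Finset.sum_le_sum fun k _ => ?_
      rw [Nat.cast_succ, ← add_assoc]
      exact rpow_neg_five_thirds_le_sub (by positivity)
    have hfirst : c ^ (-(5 : ℝ) / 3) ≤ c ^ (-(2 : ℝ) / 3) :=
      Real.rpow_le_rpow_of_exponent_le hc (by norm_num)
    have hlast : 0 ≤ (c + n) ^ (-(2 : ℝ) / 3) := Real.rpow_nonneg (by positivity) _
    rw [Finset.sum_range_succ']
    simp only [Nat.cast_zero, add_zero]
    linarith

section UnitIntervalBound

variable {g : ℝ → ℝ} {B : ℝ}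

theorem integral_mul_rpow_le_of_integral_le {c r : ℝ} (hc : 0 < c) (hr : r ≤ 0)
    (hg0 : ∀ t, 0 ≤ g t) (hg : IntervalIntegrable g volume c (c + 1))
    (hB : ∫ t in c..c + 1, g t ≤ B) :
    ∫ t in c..c + 1, g t * t ^ r ≤ B * c ^ r := by
  have hcc : c ≤ c + 1 := by linarith
  calc ∫ t in c..c + 1, g t * t ^ r ≤ ∫ t in c..c + 1, g t * c ^ r :=
        intervalIntegral.integral_mono_on hcc (hg.mul_rpow hc (by linarith) r)
          (hg.mul_const _) fun t ht =>
          mul_le_mul_of_nonneg_left (Real.rpow_le_rpow_of_nonpos hc ht.1 hr) (hg0 t)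
    _ = (∫ t in c..c + 1, g t) * c ^ r := intervalIntegral.integral_mul_const _ _
    _ ≤ B * c ^ r := mul_le_mul_of_nonneg_right hB (Real.rpow_nonneg hc.le r)

theorem integral_mul_rpow_le_sum {c r : ℝ} (hc : 0 < c) (hr : r ≤ 0) (hg0 : ∀ t, 0 ≤ g t)
    (hg : ∀ s t, IntervalIntegrable g volume s t) (hB : ∀ s, ∫ t in s..s + 1, g t ≤ B)
    (n : ℕ) :
    ∫ t in c..c + n, g t * t ^ r ≤ B * ∑ k ∈ Finset.range n, (c + k) ^ r := by
  have hpos (k : ℕ) : 0 < c + k := by positivity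
  have hsplit := intervalIntegral.sum_integral_adjacent_intervals (a := fun k : ℕ => c + k)
    (n := n) fun k _ => (hg _ _).mul_rpow (hpos k) (hpos (k + 1)) r
  simp only [Nat.cast_zero, add_zero, Nat.cast_succ, ← add_assoc] at hsplit
  rw [← hsplit, Finset.mul_sum]
  exact Finset.sum_le_sum fun k _ =>
    integral_mul_rpow_le_of_integral_le (hpos k) hr hg0 (hg _ _) (hB _)

theorem integral_mul_rpow_neg_five_thirds_le {c y : ℝ} (hc : 1 ≤ c) (hcy : c ≤ y)
    (hg0 : ∀ t, 0 ≤ g t) (hg : ∀ s t, IntervalIntegrable g volume s t)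
    (hB : ∀ s, ∫ t in s..s + 1, g t ≤ B) :
    ∫ t in c..y, g t * t ^ (-(5 : ℝ) / 3) ≤ 5 / 2 * B * c ^ (-(2 : ℝ) / 3) := by
  have hc0 : 0 < c := by linarith
  have hB0 : 0 ≤ B := (intervalIntegral.integral_nonneg (by linarith) fun t _ => hg0 t).trans (hB c)
  set n := ⌈y - c⌉₊
  have hyn : y ≤ c + n := by linarith [Nat.le_ceil (y - c)]
  calc ∫ t in c..y, g t * t ^ (-(5 : ℝ) / 3) ≤ ∫ t in c..c + n, g t * t ^ (-(5 : ℝ) / 3) := by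
        refine intervalIntegral.integral_mono_interval le_rfl hcy hyn ?_
          ((hg _ _).mul_rpow hc0 (by linarith) _)
        filter_upwards [ae_restrict_mem measurableSet_Ioc] with t ht
        exact mul_nonneg (hg0 t) (Real.rpow_nonneg (by linarith [ht.1]) _)
    _ ≤ B * ∑ k ∈ Finset.range n, (c + k) ^ (-(5 : ℝ) / 3) :=
        integral_mul_rpow_le_sum hc0 (by norm_num) hg0 hg hB n
    _ ≤ 5 / 2 * B * c ^ (-(2 : ℝ) / 3) := by
        rw [mul_assoc, mul_left_comm]
        exact mul_le_mul_of_nonneg_left (sum_rpow_neg_five_thirds_le hc n) hB0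

end UnitIntervalBound

theorem continuousOn_Ioi_of_sub_eq_integral {θ θ' : ℝ → ℝ}
    (hθ : ∀ s t : ℝ, 0 < s → s ≤ t → θ t - θ s = ∫ u in s..t, θ' u)
    (hθ' : ∀ s t : ℝ, 0 < s → s ≤ t → IntervalIntegrable θ' volume s t) :
    ContinuousOn θ (Ioi 0) := by
  intro t (ht : 0 < t)
  have hs : 0 < t / 2 := by positivity
  have hprim : ContinuousOn (fun u => θ (t / 2) + ∫ v in t / 2..u, θ' v) (Icc (t / 2) (t + 1)) := by
    have := intervalIntegral.continuousOn_primitive_interval'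
      (hθ' (t / 2) (t + 1) hs (by linarith)) left_mem_uIcc
    rw [uIcc_of_le (by linarith)] at this
    exact continuousOn_const.add this
  have heq : EqOn θ (fun u => θ (t / 2) + ∫ v in t / 2..u, θ' v) (Icc (t / 2) (t + 1)) :=
    fun u hu => by linarith [hθ _ _ hs hu.1]
  exact ((hprim.congr heq).continuousAt
    (Icc_mem_nhds (by linarith) (by linarith))).continuousWithinAt

theorem abs_sub_sub_le_of_ae_abs_sub_le {φ φ' : ℝ → ℝ} {a r t : ℝ} (ht : 0 < t) (hr : r ≤ 0)
    (hφ : φ (t + 1) - φ t = ∫ u in t..t + 1, φ' u) (hφ' : IntervalIntegrable φ' volume t (t + 1))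
    (hbd : ∀ᵐ u ∂volume, 0 < u → |φ' u - a| ≤ u ^ r) :
    |φ (t + 1) - φ t - a| ≤ t ^ r := by
  have hint : φ (t + 1) - φ t - a = ∫ u in t..t + 1, (φ' u - a) := by
    rw [intervalIntegral.integral_sub hφ' intervalIntegrable_const, hφ]
    simp
  have := intervalIntegral.norm_integral_le_of_norm_le_const_ae (a := t) (b := t + 1)
    (C := t ^ r) (f := fun u => φ' u - a) ?_
  · simpa [hint] using this
  filter_upwards [hbd] with u hu hmem
  rw [uIoc_of_le (by linarith)] at hmem
  exact (hu (ht.trans hmem.1)).trans (Real.rpow_le_rpow_of_nonpos ht hmem.1.le hr)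

theorem exists_phase_increment {θ θ' γ γ' : ℝ → ℝ} {a t : ℝ} (ht : 0 < t)
    (hγAC : ∀ s t : ℝ, 0 < s → s ≤ t → γ t - γ s = ∫ u in s..t, γ' u)
    (hγInt : ∀ s t : ℝ, 0 < s → s ≤ t → IntervalIntegrable γ' volume s t)
    (hγper : ∃ m : ℤ, γ (t + 1) - γ t = 2 * π * m)
    (hθAC : ∀ s t : ℝ, 0 < s → s ≤ t → θ t - θ s = ∫ u in s..t, θ' u)
    (hθInt : ∀ s t : ℝ, 0 < s → s ≤ t → IntervalIntegrable θ' volume s t)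
    (hbd : ∀ᵐ t ∂volume, 0 < t → |θ' t - a - γ' t| ≤ t ^ (-(2 : ℝ) / 3)) :
    ∃ (m : ℤ) (ε : ℝ), |ε| ≤ t ^ (-(2 : ℝ) / 3) ∧ θ (t + 1) = θ t + a + 2 * π * m + ε := by
  obtain ⟨m, hm⟩ := hγper
  refine ⟨m, θ (t + 1) - θ t - a - 2 * π * m, ?_, by ring⟩
  have hθ' := hθInt t (t + 1) ht (by linarith)
  have hγ' := hγInt t (t + 1) ht (by linarith)
  have hφ : θ (t + 1) - γ (t + 1) - (θ t - γ t) = ∫ u in t..t + 1, (θ' u - γ' u) := by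
    rw [intervalIntegral.integral_sub hθ' hγ', ← hθAC t (t + 1) ht (by linarith),
      ← hγAC t (t + 1) ht (by linarith)]
    ring
  have hbd' : ∀ᵐ u ∂volume, 0 < u → |θ' u - γ' u - a| ≤ u ^ (-(2 : ℝ) / 3) := by
    filter_upwards [hbd] with u hu
    rwa [sub_right_comm]
  have := abs_sub_sub_le_of_ae_abs_sub_le (φ := fun s => θ s - γ s) (φ' := fun u => θ' u - γ' u)
    ht (by norm_num) hφ (hθ'.sub hγ') hbd'
  rwa [← hm, show θ (t + 1) - θ t - a - (γ (t + 1) - γ t) =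
    θ (t + 1) - γ (t + 1) - (θ t - γ t) - a by ring]

theorem two_mul_abs_div_pi_le_norm_exp_mul_I_sub_one {a : ℝ} {n : ℤ}
    (hn : |a - 2 * π * n| ≤ π) :
    2 * |a - 2 * π * n| / π ≤ ‖Complex.exp (a * Complex.I) - 1‖ := by
  set b := a - 2 * π * n
  have hexp : Complex.exp (a * Complex.I) = Complex.exp (Complex.I * b) := by
    rw [← Complex.exp_mul_I_periodic.sub_int_mul_eq (x := (a : ℂ)) n]
    push_cast [b]
    ring_nf
  have hb2 : |b / 2| = |b| / 2 := by rw [abs_div, abs_two]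
  have hjordan : 2 / π * (|b| / 2) ≤ Real.sin (|b| / 2) :=
    Real.mul_le_sin (by positivity) (by linarith)
  rw [hexp, Complex.norm_exp_I_mul_ofReal_sub_one, norm_mul, Real.norm_eq_abs, Real.norm_eq_abs,
    abs_two, Real.abs_sin_eq_sin_abs_of_abs_le_pi (by rw [hb2]; linarith [Real.pi_pos]), hb2]
  calc 2 * |b| / π = 2 * (2 / π * (|b| / 2)) := by ring
    _ ≤ 2 * Real.sin (|b| / 2) := by linarith

theorem norm_exp_mul_I_div_add_one_sub_inv_le {ε t : ℝ} (ht : 1 ≤ t)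
    (hε : |ε| ≤ t ^ (-(2 : ℝ) / 3)) :
    ‖Complex.exp (ε * Complex.I) / (t + 1) - (t : ℂ)⁻¹‖ ≤ 2 * t ^ (-(5 : ℝ) / 3) := by
  have ht0 : 0 < t := by linarith
  have hsplit : Complex.exp (ε * Complex.I) / (t + 1) - (t : ℂ)⁻¹ =
      (Complex.exp (Complex.I * ε) - 1) * ((t + 1 : ℝ) : ℂ)⁻¹ - (((t * (t + 1))⁻¹ : ℝ) : ℂ) := by
    have ht' : (t : ℂ) ≠ 0 := by exact_mod_cast ht0.ne'
    have ht1 : (t : ℂ) + 1 ≠ 0 := by exact_mod_cast (by linarith : t + 1 ≠ 0)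
    push_cast
    field_simp
    ring
  have hrot : ‖Complex.exp (Complex.I * ε) - 1‖ * (t + 1)⁻¹ ≤ t ^ (-(5 : ℝ) / 3) := by
    calc ‖Complex.exp (Complex.I * ε) - 1‖ * (t + 1)⁻¹ ≤ t ^ (-(2 : ℝ) / 3) * t ^ (-1 : ℝ) := by
          rw [Real.rpow_neg_one]
          gcongr
          · exact Real.norm_exp_I_mul_ofReal_sub_one_le.trans hε
          · linarith
      _ = t ^ (-(5 : ℝ) / 3) := by rw [← Real.rpow_add ht0]; norm_num
  have hdiff : (t * (t + 1))⁻¹ ≤ t ^ (-(5 : ℝ) / 3) := by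
    calc (t * (t + 1))⁻¹ ≤ t ^ (-2 : ℝ) := by
          rw [Real.rpow_neg ht0.le, Real.rpow_two]
          gcongr
          linarith
      _ ≤ t ^ (-(5 : ℝ) / 3) := Real.rpow_le_rpow_of_exponent_le ht (by norm_num)
  rw [hsplit]
  refine (norm_sub_le _ _).trans ?_
  rw [norm_mul, norm_inv, Complex.norm_real, Complex.norm_real, Real.norm_eq_abs,
    Real.norm_eq_abs, abs_of_pos (by linarith), abs_of_pos (by positivity)]
  linarith

theorem norm_sub_one_mul_integral_le {f : ℝ → ℂ} {g : ℝ → ℝ} {z : ℂ} {x₀ x : ℝ} (hx : x₀ ≤ x)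
    (hf : IntervalIntegrable f volume x₀ (x + 1)) (hg : IntervalIntegrable g volume x₀ x)
    (hfg : ∀ t ∈ Ioc x₀ x, ‖f (t + 1) - z * f t‖ ≤ g t) :
    ‖(z - 1) * ∫ t in x₀..x, f t‖ ≤
      ‖∫ t in x₀..x₀ + 1, f t‖ + ‖∫ t in x..x + 1, f t‖ + ∫ t in x₀..x, g t := by
  have hsub {c d : ℝ} (hc : x₀ ≤ c) (hcd : c ≤ d) (hd : d ≤ x + 1) :
      IntervalIntegrable f volume c d :=
    hf.mono_set (uIcc_subset_uIcc (by rw [uIcc_of_le (by linarith)]; exact ⟨hc, by linarith⟩)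
      (by rw [uIcc_of_le (by linarith)]; exact ⟨by linarith, hd⟩))
  have hI := hsub le_rfl hx (by linarith)
  have hJ : IntervalIntegrable (fun t => f (t + 1)) volume x₀ x := by
    simpa using (hsub (by linarith) (by linarith) le_rfl : IntervalIntegrable f volume
      (x₀ + 1) (x + 1)).comp_add_right 1
  have hshift : (z - 1) * ∫ t in x₀..x, f t = (∫ t in x..x + 1, f t) - (∫ t in x₀..x₀ + 1, f t) -
      ∫ t in x₀..x, (f (t + 1) - z * f t) := by
    rw [intervalIntegral.integral_sub hJ (hI.const_mul z), intervalIntegral.integral_const_mul,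
      intervalIntegral.integral_comp_add_right f 1]
    have h₁ := intervalIntegral.integral_add_adjacent_intervals
      (hsub le_rfl (le_add_of_nonneg_right zero_le_one) (by linarith) :
        IntervalIntegrable f volume x₀ (x₀ + 1)) (hsub (by linarith) (by linarith) le_rfl)
    have h₂ := intervalIntegral.integral_add_adjacent_intervals hI
      (hsub hx (by linarith) le_rfl)
    linear_combination h₁ - h₂
  rw [hshift]
  refine (norm_sub_le _ _).trans (add_le_add ((norm_sub_le _ _).trans_eq (add_comm _ _)) ?_)
  exact intervalIntegral.norm_integral_le_of_norm_le hx
    (Filter.Eventually.of_forall hfg) hg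

def oscIntegrand (Γ θ : ℝ → ℝ) (t : ℝ) : ℂ := Γ t * Complex.exp (θ t * Complex.I) / t

section oscIntegrand

variable {Γ θ : ℝ → ℝ}

theorem im_oscIntegrand (t : ℝ) : (oscIntegrand Γ θ t).im = Γ t * Real.sin (θ t) / t := by
  rw [oscIntegrand, Complex.div_ofReal_im, Complex.im_ofReal_mul, Complex.exp_ofReal_mul_I_im]

theorem integral_mul_sin_div_eq_im_integral_oscIntegrand {c d : ℝ}
    (h : IntervalIntegrable (oscIntegrand Γ θ) volume c d) :
    ∫ t in c..d, Γ t * Real.sin (θ t) / t = (∫ t in c..d, oscIntegrand Γ θ t).im := by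
  simp_rw [← im_oscIntegrand]
  exact intervalIntegral.intervalIntegral_im h

theorem norm_oscIntegrand {t : ℝ} (ht : 0 < t) : ‖oscIntegrand Γ θ t‖ = |Γ t| / t := by
  rw [oscIntegrand, norm_div, norm_mul, Complex.norm_exp_ofReal_mul_I, Complex.norm_real,
    Complex.norm_real, Real.norm_eq_abs, Real.norm_eq_abs, mul_one, abs_of_pos ht]

theorem intervalIntegrable_oscIntegrand {c d : ℝ} (hc : 0 < c) (hd : 0 < d)
    (hΓ : AEStronglyMeasurable Γ) (habs : IntervalIntegrable (fun t => |Γ t|) volume c d)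
    (hθ : ContinuousOn θ (Ioi 0)) :
    IntervalIntegrable (oscIntegrand Γ θ) volume c d := by
  have hpos : ∀ t ∈ uIcc c d, 0 < t := fun t ht => lt_of_lt_of_le (lt_min hc hd) ht.1
  refine (habs.mul_rpow hc hd (-1)).mono_fun ?_ ?_
  · have hexp : ContinuousOn (fun t => Complex.exp (θ t * Complex.I)) (uIoc c d) :=
      (Complex.continuous_exp.comp_continuousOn ((Complex.continuous_ofReal.comp_continuousOn
        hθ).mul continuousOn_const)).mono fun t ht => hpos t (uIoc_subset_uIcc ht)
    exact ((Complex.continuous_ofReal.comp_aestronglyMeasurable hΓ).restrict.mul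
      (hexp.aestronglyMeasurable measurableSet_uIoc)).div₀
      (Complex.continuous_ofReal.comp_aestronglyMeasurable aestronglyMeasurable_id)
  · filter_upwards [ae_restrict_mem measurableSet_uIoc] with t ht
    have ht0 := hpos t (uIoc_subset_uIcc ht)
    have hnn : 0 ≤ |Γ t| * t ^ (-1 : ℝ) := by positivity
    rw [norm_oscIntegrand ht0, Real.norm_eq_abs, abs_of_nonneg hnn, Real.rpow_neg_one,
      div_eq_mul_inv]

theorem norm_integral_oscIntegrand_le {B c : ℝ} (hc : 1 ≤ c)
    (habs : IntervalIntegrable (fun t => |Γ t|) volume c (c + 1))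
    (hB : ∫ t in c..c + 1, |Γ t| ≤ B) :
    ‖∫ t in c..c + 1, oscIntegrand Γ θ t‖ ≤ B * c ^ (-(2 : ℝ) / 3) := by
  have hc0 : 0 < c := by linarith
  refine (intervalIntegral.norm_integral_le_of_norm_le (by linarith) ?_
    (habs.mul_rpow hc0 (by linarith) _)).trans
    (integral_mul_rpow_le_of_integral_le hc0 (by norm_num) (fun t => abs_nonneg _) habs hB)
  filter_upwards with t ht
  have ht1 : 1 ≤ t := hc.trans ht.1.le
  rw [norm_oscIntegrand (by linarith), div_eq_mul_inv, ← Real.rpow_neg_one]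
  exact mul_le_mul_of_nonneg_left (Real.rpow_le_rpow_of_exponent_le ht1 (by norm_num))
    (abs_nonneg _)

theorem norm_oscIntegrand_add_one_sub_le {a ε t : ℝ} {m : ℤ} (ht : 1 ≤ t)
    (hΓ : Γ (t + 1) = Γ t) (hθ : θ (t + 1) = θ t + a + 2 * π * m + ε)
    (hε : |ε| ≤ t ^ (-(2 : ℝ) / 3)) :
    ‖oscIntegrand Γ θ (t + 1) - Complex.exp (a * Complex.I) * oscIntegrand Γ θ t‖ ≤
      2 * (|Γ t| * t ^ (-(5 : ℝ) / 3)) := by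
  have hexp : Complex.exp (θ (t + 1) * Complex.I) = Complex.exp (θ t * Complex.I) *
      Complex.exp (a * Complex.I) * Complex.exp (ε * Complex.I) := by
    have hper := Complex.exp_mul_I_periodic.int_mul m ((θ t + a + ε : ℝ) : ℂ)
    rw [← Complex.exp_add, ← Complex.exp_add, hθ, show (θ t : ℂ) * Complex.I + a * Complex.I +
      ε * Complex.I = ((θ t + a + ε : ℝ) : ℂ) * Complex.I by push_cast; ring, ← hper]
    push_cast
    ring_nf
  have hfactor : oscIntegrand Γ θ (t + 1) - Complex.exp (a * Complex.I) * oscIntegrand Γ θ t =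
      Γ t * Complex.exp (θ t * Complex.I) * Complex.exp (a * Complex.I) *
        (Complex.exp (ε * Complex.I) / (t + 1) - (t : ℂ)⁻¹) := by
    simp only [oscIntegrand, hΓ, hexp]
    push_cast
    ring
  rw [hfactor, norm_mul, norm_mul, norm_mul, Complex.norm_exp_ofReal_mul_I,
    Complex.norm_exp_ofReal_mul_I, Complex.norm_real, Real.norm_eq_abs, mul_one, mul_one,
    mul_left_comm]
  exact mul_le_mul_of_nonneg_left (norm_exp_mul_I_div_add_one_sub_inv_le ht hε) (abs_nonneg _)

end oscIntegrand

theorem norm_exp_mul_I_sub_one_mul_norm_integral_oscIntegrand_le {Γ θ : ℝ → ℝ} {a B x₀ x : ℝ}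
    (h1x₀ : 1 ≤ x₀) (hx : x₀ ≤ x) (hΓ : AEStronglyMeasurable Γ) (hΓper : Function.Periodic Γ 1)
    (habs : ∀ c d, IntervalIntegrable (fun t => |Γ t|) volume c d)
    (hB : ∀ c, ∫ t in c..c + 1, |Γ t| ≤ B) (hθ : ContinuousOn θ (Ioi 0))
    (hphase : ∀ t, 1 ≤ t → ∃ (m : ℤ) (ε : ℝ),
      |ε| ≤ t ^ (-(2 : ℝ) / 3) ∧ θ (t + 1) = θ t + a + 2 * π * m + ε) :
    ‖Complex.exp (a * Complex.I) - 1‖ * ‖∫ t in x₀..x, oscIntegrand Γ θ t‖ ≤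
      7 * (B * x₀ ^ (-(2 : ℝ) / 3)) := by
  have hx₀ : 0 < x₀ := by linarith
  rw [← norm_mul]
  refine (norm_sub_one_mul_integral_le hx
    (intervalIntegrable_oscIntegrand hx₀ (by linarith) hΓ (habs _ _) hθ)
    (((habs x₀ x).mul_rpow hx₀ (by linarith) (-(5 : ℝ) / 3)).const_mul 2) fun t ht => ?_).trans ?_
  · obtain ⟨m, ε, hε, hθt⟩ := hphase t (by linarith [ht.1])
    exact norm_oscIntegrand_add_one_sub_le (by linarith [ht.1]) (hΓper t) hθt hε
  have hB0 : 0 ≤ B :=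
    (intervalIntegral.integral_nonneg (by linarith) fun t _ => abs_nonneg (Γ t)).trans (hB 0)
  have h₀ := norm_integral_oscIntegrand_le (θ := θ) h1x₀ (habs _ _) (hB x₀)
  have h₁ := norm_integral_oscIntegrand_le (θ := θ) (h1x₀.trans hx) (habs _ _) (hB x)
  have hx_le : B * x ^ (-(2 : ℝ) / 3) ≤ B * x₀ ^ (-(2 : ℝ) / 3) :=
    mul_le_mul_of_nonneg_left (Real.rpow_le_rpow_of_nonpos hx₀ hx (by norm_num)) hB0
  have htail := integral_mul_rpow_neg_five_thirds_le h1x₀ hx (fun t => abs_nonneg (Γ t)) habs hB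
  rw [intervalIntegral.integral_const_mul]
  linarith

theorem le_pi_of_isLeast_abs_sub_two_pi_mul {a α : ℝ}
    (hα : IsLeast {r : ℝ | ∃ n : ℤ, r = |a - 2 * π * n|} α) : α ≤ π := by
  refine (hα.2 ⟨round (a / (2 * π)), rfl⟩).trans ?_
  have hround := abs_sub_round (a / (2 * π))
  have h2π : 0 < 2 * π := by positivity
  calc |a - 2 * π * round (a / (2 * π))| = 2 * π * |a / (2 * π) - round (a / (2 * π))| := by
        rw [← abs_of_pos h2π, ← abs_mul, abs_of_pos h2π, mul_sub, mul_div_cancel₀ _ h2π.ne']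
    _ ≤ π := by nlinarith

theorem div_le_rA {α : ℝ} (hα : 0 < α) : 10 ^ 4 / α ≤ rA α := by
  have hs : 10 ^ 4 / α ≤ sConst α (2 / 3) 1 := by
    have hbase : (10 : ℝ) ^ 4 ≤ 100 * 1 * α ^ ((2 : ℝ) / 3 - 1) + 10 ^ 4 := by
      have := Real.rpow_nonneg hα.le ((2 : ℝ) / 3 - 1)
      linarith
    rw [sConst]
    gcongr
    exact hbase.trans (Real.self_le_rpow_of_one_le (by linarith) (by norm_num))
  have hr : 0 ≤ rConst α (2 / 3) 1 := by
    rw [rConst]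
    have := Real.rpow_nonneg hα.le ((2 : ℝ) / 3 - 1)
    positivity
  rw [rA]
  have := Real.sqrt_nonneg (α ^ (-(4 : ℝ) / 3) + 3)
  nlinarith

theorem le_rA_mul_of_two_mul_div_pi_mul_le {α y K : ℝ} (hα : 0 < α) (hK : 0 ≤ K)
    (h : 2 * α / π * y ≤ 7 * K) : y ≤ K * rA α := by
  calc y = π / 2 * (2 * α / π * y) / α := by field_simp
    _ ≤ π / 2 * (7 * K) / α := by gcongr
    _ ≤ 10 ^ 4 / α * K := by
        rw [div_mul_eq_mul_div (10 ^ 4 : ℝ) α]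
        gcongr ?_ / α
        nlinarith [Real.pi_lt_four]
    _ ≤ K * rA α := by
        rw [mul_comm]
        exact mul_le_mul_of_nonneg_left (div_le_rA hα) hK

/-- Lemma 4.3: oscillatory integral estimate coupled with a periodic term. If
`a ∉ 2πℤ`, `α = min_{n∈ℤ}|a - 2πn|`, `Γ ∈ L²_loc` is 1-periodic, `γ` is locally
absolutely continuous with `γ mod 2π` 1-periodic, and
`|θ'(t) - a - γ'(t)| ≤ t^{-2/3}` a.e., then for `x ≥ x₀ > r(α)`,
`|∫_{x₀}^x Γ(t) sin θ(t)/t dt| ≤ ‖Γ‖₂ r(α)/x₀^{2/3}`. -/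
theorem oscillatory_integral_periodic_coupling
    (a : ℝ) (ha : ∀ n : ℤ, a ≠ 2 * π * n)
    (α : ℝ) (hα : IsLeast {r : ℝ | ∃ n : ℤ, r = |a - 2 * π * n|} α)
    (γ γ' : ℝ → ℝ)
    (hγAC : ∀ s t : ℝ, 0 < s → s ≤ t → γ t - γ s = ∫ u in s..t, γ' u)
    (hγInt : ∀ s t : ℝ, 0 < s → s ≤ t → IntervalIntegrable γ' volume s t)
    (hγper : ∀ t : ℝ, ∃ m : ℤ, γ (t + 1) - γ t = 2 * π * m)
    (Γ : ℝ → ℝ) (hΓmeas : Measurable Γ) (hΓper : Function.Periodic Γ 1)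
    (hΓL2 : IntervalIntegrable (fun t => Γ t ^ 2) volume 0 1)
    (θ θ' : ℝ → ℝ)
    (hθAC : ∀ s t : ℝ, 0 < s → s ≤ t → θ t - θ s = ∫ u in s..t, θ' u)
    (hθInt : ∀ s t : ℝ, 0 < s → s ≤ t → IntervalIntegrable θ' volume s t)
    (hbd : ∀ᵐ t ∂volume, 0 < t → |θ' t - a - γ' t| ≤ t ^ (-(2 : ℝ) / 3))
    (x₀ x : ℝ) (hx₀ : rA α < x₀) (hx : x₀ ≤ x) :
    |∫ t in x₀..x, Γ t * Real.sin (θ t) / t| ≤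
      Real.sqrt (∫ t in (0:ℝ)..1, Γ t ^ 2) * rA α / x₀ ^ ((2 : ℝ) / 3) := by
  have hαπ := le_pi_of_isLeast_abs_sub_two_pi_mul hα
  obtain ⟨n, hn⟩ := hα.1
  have hα0 : 0 < α := hn ▸ abs_pos.2 (sub_ne_zero.2 (ha n))
  have h1x₀ : 1 ≤ x₀ := ((one_le_div hα0).2 (by linarith [Real.pi_lt_four])).trans
    ((div_le_rA hα0).trans hx₀.le)
  have hΓ := hΓmeas.aestronglyMeasurable (μ := volume)
  have habs c d := hΓper.intervalIntegrable_abs hΓ hΓL2 c d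
  have hθ := continuousOn_Ioi_of_sub_eq_integral hθAC hθInt
  have hkey := norm_exp_mul_I_sub_one_mul_norm_integral_oscIntegrand_le h1x₀ hx hΓ hΓper habs
    (hΓper.integral_abs_le_sqrt_integral_sq hΓ hΓL2) hθ
    fun t ht => exists_phase_increment (by linarith) hγAC hγInt (hγper t) hθAC hθInt hbd
  have hlow : 2 * α / π ≤ ‖Complex.exp (a * Complex.I) - 1‖ :=
    hn ▸ two_mul_abs_div_pi_le_norm_exp_mul_I_sub_one (hn ▸ hαπ)
  rw [integral_mul_sin_div_eq_im_integral_oscIntegrand (intervalIntegrable_oscIntegrand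
    (by linarith) (by linarith) hΓ (habs _ _) hθ), div_eq_mul_inv, ← Real.rpow_neg (by linarith),
    ← neg_div, mul_right_comm]
  exact (Complex.abs_im_le_norm _).trans (le_rA_mul_of_two_mul_div_pi_mul_le hα0 (by positivity)
    ((mul_le_mul_of_nonneg_right hlow (norm_nonneg _)).trans hkey))
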